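/- Let Q and T be real symmetric bilinear forms (equivalently, quadratic forms) on ℝ^n. Suppose Q is positive semidefinite and T vanishes on the kernel of Q, i.e., T(v, v) = 0 and T(v, w) = 0 for all v with Q(v, v) = 0 and all w. Then there exists ε > 0 such that Q + εT is positive semidefinite. -/
import Mathlib
lemma cont_bilin (n : ℕ) (B : (Fin n → ℝ) →ₗ[ℝ] (Fin n → ℝ) →ₗ[ℝ] ℝ) :
    Continuous fun v => B v v := by
  have hrep : ∀ v : Fin n → ℝ, B v v =
      ∑ i, ∑ j, v i * v j * B (Pi.single i 1 : Fin n → ℝ) (Pi.single j 1 : Fin n → ℝ) := by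
    intro v
    have hv : v = ∑ i, v i • (Pi.single i 1 : Fin n → ℝ) := by
      funext j
      simp [Finset.sum_apply, Pi.single_apply]
    conv_lhs => rw [hv]
    simp [map_sum, map_smul, LinearMap.sum_apply, LinearMap.smul_apply, smul_eq_mul,
      Finset.mul_sum, mul_assoc]
    rw [Finset.sum_comm]
    exact Finset.sum_congr rfl fun i _ => Finset.sum_congr rfl fun j _ => by ring
  simp only [hrep]
  fun_prop

theorem stmt_10 (n : ℕ)
    (Q T : (Fin n → ℝ) →ₗ[ℝ] (Fin n → ℝ) →ₗ[ℝ] ℝ)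
    (hQsymm : ∀ v w, Q v w = Q w v) (hTsymm : ∀ v w, T v w = T w v)
    (hQpsd : ∀ v, 0 ≤ Q v v)
    (hTker : ∀ v, Q v v = 0 → ∀ w, T v w = 0) :
    ∃ ε : ℝ, 0 < ε ∧ ∀ v, 0 ≤ Q v v + ε * T v v := by
  classical
  -- Cauchy–Schwarz: zero diagonal implies zero row
  have hker : ∀ v, Q v v = 0 → ∀ w, Q v w = 0 := by
    intro v hv w
    have h := fun t : ℝ => hQpsd (v + t • w)
    simp only [map_add, map_smul, LinearMap.add_apply, LinearMap.smul_apply,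
      smul_eq_mul, hv, hQsymm w v] at h
    set a := Q v w with ha
    set b := Q w w with hb'
    have hb : 0 ≤ b := hQpsd w
    set t := -a / (b + 1) with htdef
    have ht : t * (b + 1) = -a := by
      rw [htdef]; field_simp
    have h1 := h t
    nlinarith [h1, ht, hb, sq_nonneg t, sq_nonneg a]
  set K : Submodule ℝ (Fin n → ℝ) := LinearMap.ker Q with hKdef
  have hmemK : ∀ v, Q v v = 0 → v ∈ K := by
    intro v hv
    exact LinearMap.mem_ker.mpr (LinearMap.ext fun w => hker v hv w)
  have hKQ : ∀ k ∈ K, ∀ w, Q k w = 0 := by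
    intro k hk w
    rw [LinearMap.mem_ker.mp hk]; rfl
  have hKT : ∀ k ∈ K, ∀ w, T k w = 0 := by
    intro k hk w
    exact hTker k (hKQ k hk k) w
  obtain ⟨W, hW⟩ := Submodule.exists_isCompl K
  have hdec : ∀ v : Fin n → ℝ, ∃ k ∈ K, ∃ w ∈ W, v = k + w := by
    intro v
    have hv : v ∈ K ⊔ W := by rw [hW.sup_eq_top]; trivial
    obtain ⟨k, hk, w, hw, h⟩ := Submodule.mem_sup.mp hv
    exact ⟨k, hk, w, hw, h.symm⟩
  suffices h : ∃ ε, 0 < ε ∧ ∀ w ∈ W, 0 ≤ Q w w + ε * T w w by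
    obtain ⟨ε, hε, hall⟩ := h
    refine ⟨ε, hε, fun v => ?_⟩
    obtain ⟨k, hk, w, hw, rfl⟩ := hdec v
    have e1 : Q (k + w) (k + w) = Q w w := by
      simp [map_add, hKQ k hk, hQsymm w k, hKQ k hk w]
    have e2 : T (k + w) (k + w) = T w w := by
      simp [map_add, hKT k hk, hTsymm w k, hKT k hk w]
    rw [e1, e2]
    exact hall w hw
  -- positive definiteness on W
  have hWpos : ∀ w ∈ W, w ≠ 0 → 0 < Q w w := by
    intro w hw h0
    rcases (hQpsd w).lt_or_eq with h | h
    · exact h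
    · exact absurd (hW.inf_eq_bot ▸ Submodule.mem_inf.mpr ⟨hmemK w h.symm, hw⟩ :
        w ∈ (⊥ : Submodule ℝ (Fin n → ℝ))) (by simpa using h0)
  set S : Set (Fin n → ℝ) := {w | w ∈ W ∧ ‖w‖ = 1} with hSdef
  by_cases hS : S.Nonempty
  · have hScl : IsClosed S := by
      have h1 : IsClosed (W : Set (Fin n → ℝ)) := Submodule.closed_of_finiteDimensional W
      have h2 : IsClosed {w : Fin n → ℝ | ‖w‖ = 1} := isClosed_eq continuous_norm continuous_const
      exact h1.inter h2
    have hSbd : IsCompact S := by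
      have : S ⊆ Metric.closedBall 0 1 := by
        intro w hw
        simp [Metric.mem_closedBall, dist_zero_right, hw.2]
      exact (isCompact_closedBall 0 1).of_isClosed_subset hScl this
    obtain ⟨u, huS, humin⟩ := hSbd.exists_isMinOn hS (cont_bilin n Q).continuousOn
    obtain ⟨u', hu'S, humax⟩ := hSbd.exists_isMaxOn hS
      ((cont_bilin n T).abs.continuousOn)
    set c := Q u u with hc
    set C := |T u' u'| with hC
    have hcpos : 0 < c := hWpos u huS.1 (by intro h; have h2 := huS.2; rw [h] at h2; simp at h2)
    have hC0 : 0 ≤ C := abs_nonneg _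
    refine ⟨c / (C + 1), by positivity, ?_⟩
    intro w hw
    rcases eq_or_ne w 0 with rfl | h0
    · simp
    · have hr : 0 < ‖w‖ := norm_pos_iff.mpr h0
      set u₀ : Fin n → ℝ := ‖w‖⁻¹ • w with hu₀
      have hu₀S : u₀ ∈ S := ⟨W.smul_mem _ hw, by
        rw [hu₀, norm_smul, norm_inv, norm_norm, inv_mul_cancel₀ hr.ne']⟩
      have hQw : Q w w = ‖w‖ ^ 2 * Q u₀ u₀ := by
        rw [hu₀]
        simp [map_smul, smul_eq_mul]
        field_simp
      have hTw : T w w = ‖w‖ ^ 2 * T u₀ u₀ := by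
        rw [hu₀]
        simp [map_smul, smul_eq_mul]
        field_simp
      have h1 : c ≤ Q u₀ u₀ := isMinOn_iff.mp humin u₀ hu₀S
      have h2 : |T u₀ u₀| ≤ C := isMaxOn_iff.mp humax u₀ hu₀S
      have h3 : -C ≤ T u₀ u₀ := neg_le_of_abs_le h2
      rw [hQw, hTw]
      have key : 0 ≤ Q u₀ u₀ + c / (C + 1) * T u₀ u₀ := by
        have : c / (C + 1) * T u₀ u₀ ≥ c / (C + 1) * (-C) := by
          apply mul_le_mul_of_nonneg_left h3 (by positivity)
        have hcc : c / (C + 1) * C ≤ c := by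
          rw [div_mul_eq_mul_div, div_le_iff₀ (by positivity)]
          nlinarith
        nlinarith
      nlinarith [sq_nonneg ‖w‖]
  · refine ⟨1, one_pos, fun w hw => ?_⟩
    rcases eq_or_ne w 0 with rfl | h0
    · simp
    · exfalso
      have hr : 0 < ‖w‖ := norm_pos_iff.mpr h0
      exact hS ⟨‖w‖⁻¹ • w, W.smul_mem _ hw, by
        rw [norm_smul, norm_inv, norm_norm, inv_mul_cancel₀ hr.ne']⟩
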